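/- arXiv:1905.12631 — 3 statements merged into one kernel-verified Lean document; each statement's English description precedes it below -/
import Mathlib

section
/- For every imaginary octonion unit eᵢ (i = 1, …, 7) and all reals α₁, α₂, α₃: (((eᵢ·exp(−e₁α₁))·exp(−e₂α₂))·exp(−e₄α₃))·exp(e₄β₃) = ((eᵢ·exp(−e₁α₁))·exp(−e₂α₂))·(exp(−e₄α₃)·exp(e₄β₃)) for all reals β₃ (and the analogous re-association identities hold for the e₂ and e₁ factors). -/
noncomputable section
open MeasureTheory Real

/-- Octonions as the Cayley–Dickson double of the quaternions:
pairs of quaternions with the Cayley–Dickson product `omul`.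
(The additive, scalar and topological structure is the product structure.) -/
abbrev Octonion : Type := Quaternion ℝ × Quaternion ℝ

/-- Cayley–Dickson multiplication of octonions. -/
def omul (x y : Octonion) : Octonion :=
  (x.1 * y.1 - star y.2 * x.2, y.2 * x.1 + x.2 * star y.1)

/-- The octonion `1`. -/
def oone : Octonion := (1, 0)

/-- Octonion conjugation. -/
def oconj (x : Octonion) : Octonion := (star x.1, -x.2)

/-- Real part of an octonion. -/
def ore (x : Octonion) : ℝ := x.1.re

/-- `o · o*`, as a real number (its imaginary part vanishes). -/
def onormSq (x : Octonion) : ℝ := ore (omul x (oconj x))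

/-- The octonion norm `|o| = √(o·o*)`. -/
def oabs (x : Octonion) : ℝ := Real.sqrt (onormSq x)

/-- Inverse of a (nonzero) octonion. -/
def oinv (x : Octonion) : Octonion := (onormSq x)⁻¹ • oconj x

def e1 : Octonion := ((⟨0,1,0,0⟩ : Quaternion ℝ), 0)
def e2 : Octonion := ((⟨0,0,1,0⟩ : Quaternion ℝ), 0)
def e3 : Octonion := ((⟨0,0,0,1⟩ : Quaternion ℝ), 0)
def e4 : Octonion := (0, (⟨1,0,0,0⟩ : Quaternion ℝ))
def e5 : Octonion := (0, (⟨0,1,0,0⟩ : Quaternion ℝ))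
def e6 : Octonion := (0, (⟨0,0,1,0⟩ : Quaternion ℝ))
def e7 : Octonion := (0, (⟨0,0,0,1⟩ : Quaternion ℝ))

/-- Powers of an octonion (well defined since octonions are power-associative). -/
def opow (o : Octonion) : ℕ → Octonion
  | 0 => oone
  | n + 1 => omul o (opow o n)

/-- The octonion exponential `exp o = ∑ oᵏ/k!`. -/
def octExp (o : Octonion) : Octonion :=
  ∑' k : ℕ, ((k.factorial : ℝ)⁻¹) • opow o k

/-- The octonion Fourier transform of `u : ℝ³ → 𝕆`,
with octonion products evaluated left to right. -/
def OFT (u : ℝ × ℝ × ℝ → Octonion) (f : ℝ × ℝ × ℝ) : Octonion :=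
  ∫ x : ℝ × ℝ × ℝ,
    omul (omul (omul (u x) (octExp ((-(2 * π * f.1 * x.1)) • e1)))
        (octExp ((-(2 * π * f.2.1 * x.2.1)) • e2)))
      (octExp ((-(2 * π * f.2.2 * x.2.2)) • e4))

/-!
For an imaginary unit `e` with `e² = -1` the exponential series splits into its even and odd
parts, so `exp (t e) = cos t + sin t · e` lies in `ℝ ⊕ ℝ e`. Expanding `(x · exp (a e)) · exp (b e)`
bilinearly, the only non-trivial reassociation left is `(x e) e = x (e e)`, which is the right
alternative law of the octonions.
-/

lemma omul_oone (x : Octonion) : omul x oone = x := by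
  simp [omul, oone]

lemma oone_omul (x : Octonion) : omul oone x = x := by
  simp [omul, oone]

lemma omul_add_left (x y z : Octonion) : omul (x + y) z = omul x z + omul y z := by
  simp only [omul, Prod.fst_add, Prod.snd_add, Prod.mk_add_mk, mul_add, add_mul]
  congr 1 <;> abel

lemma omul_add_right (x y z : Octonion) : omul x (y + z) = omul x y + omul x z := by
  simp only [omul, Prod.fst_add, Prod.snd_add, Prod.mk_add_mk, star_add, mul_add, add_mul]
  congr 1 <;> abel

lemma omul_smul_left (r : ℝ) (x y : Octonion) : omul (r • x) y = r • omul x y := by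
  simp [omul, smul_sub, smul_add]

lemma omul_smul_right (r : ℝ) (x y : Octonion) : omul x (r • y) = r • omul x y := by
  simp [omul, smul_sub, smul_add]

lemma omul_neg_right (x y : Octonion) : omul x (-y) = -omul x y := by
  simpa using omul_smul_right (-1) x y

lemma omul_omul_self (y x : Octonion) : omul (omul y x) x = omul y (omul x x) := by
  obtain ⟨⟨a, b⟩, ⟨c, d⟩⟩ := (y, x)
  ext <;> simp only [omul, Quaternion.re_mul, Quaternion.imI_mul, Quaternion.imJ_mul,
    Quaternion.imK_mul, Quaternion.re_sub, Quaternion.imI_sub, Quaternion.imJ_sub,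
    Quaternion.imK_sub, Quaternion.re_add, Quaternion.imI_add, Quaternion.imJ_add,
    Quaternion.imK_add, Quaternion.re_star, Quaternion.imI_star, Quaternion.imJ_star,
    Quaternion.imK_star] <;> ring

lemma omul_self_of_fst {q : Quaternion ℝ} (hq : q * q = -1) : omul (q, 0) (q, 0) = -oone := by
  simp [omul, oone, hq]

lemma omul_self_of_snd {q : Quaternion ℝ} (hq : star q * q = 1) : omul (0, q) (0, q) = -oone := by
  simp [omul, oone, hq]

-- `show` re-elaborates the literals with the standard `Quaternion ℝ` instances, which `simp` needs.
lemma e1_omul_self : omul e1 e1 = -oone :=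
  omul_self_of_fst (show (⟨0, 1, 0, 0⟩ : Quaternion ℝ) * ⟨0, 1, 0, 0⟩ = -1 by ext <;> simp)

lemma e2_omul_self : omul e2 e2 = -oone :=
  omul_self_of_fst (show (⟨0, 0, 1, 0⟩ : Quaternion ℝ) * ⟨0, 0, 1, 0⟩ = -1 by ext <;> simp)

lemma e4_omul_self : omul e4 e4 = -oone :=
  omul_self_of_snd (show star (⟨1, 0, 0, 0⟩ : Quaternion ℝ) * ⟨1, 0, 0, 0⟩ = 1 by ext <;> simp)

section ImaginaryUnit

variable {e : Octonion}

lemma omul_omul_of_omul_self (he : omul e e = -oone) (y : Octonion) :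
    omul (omul y e) e = -y := by
  rw [omul_omul_self, he, omul_neg_right, omul_oone]

lemma opow_smul_of_omul_self (he : omul e e = -oone) (t : ℝ) (n : ℕ) :
    opow (t • e) (2 * n) = ((-1) ^ n * t ^ (2 * n)) • oone ∧
      opow (t • e) (2 * n + 1) = ((-1) ^ n * t ^ (2 * n + 1)) • e := by
  induction n with
  | zero => simp [opow, omul_oone]
  | succ n ih =>
    have even : opow (t • e) (2 * (n + 1)) = ((-1) ^ (n + 1) * t ^ (2 * (n + 1))) • oone := by
      rw [show 2 * (n + 1) = 2 * n + 1 + 1 by ring, opow, ih.2, omul_smul_left, omul_smul_right,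
        he, smul_smul, smul_neg, ← neg_smul]
      ring_nf
    refine ⟨even, ?_⟩
    rw [opow, even, omul_smul_left, omul_smul_right, omul_oone, smul_smul]
    ring_nf

lemma octExp_smul_of_omul_self (he : omul e e = -oone) (t : ℝ) :
    octExp (t • e) = cos t • oone + sin t • e := by
  let term (k : ℕ) : Octonion := (k.factorial : ℝ)⁻¹ • opow (t • e) k
  have hcos : HasSum (fun n ↦ term (2 * n)) (cos t • oone) := by
    refine ((hasSum_cos t).smul_const oone).congr_fun fun n ↦ ?_
    simp only [term]
    rw [(opow_smul_of_omul_self he t n).1, smul_smul, inv_mul_eq_div]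
  have hsin : HasSum (fun n ↦ term (2 * n + 1)) (sin t • e) := by
    refine ((hasSum_sin t).smul_const e).congr_fun fun n ↦ ?_
    simp only [term]
    rw [(opow_smul_of_omul_self he t n).2, smul_smul, inv_mul_eq_div]
  exact (hcos.even_add_odd hsin).tsum_eq

lemma omul_octExp_smul_octExp_smul (he : omul e e = -oone) (x : Octonion) (a b : ℝ) :
    omul (omul x (octExp (a • e))) (octExp (b • e)) =
      omul x (omul (octExp (a • e)) (octExp (b • e))) := by
  simp only [octExp_smul_of_omul_self he, omul_add_left, omul_add_right, omul_smul_left,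
    omul_smul_right, omul_oone, oone_omul, omul_omul_of_omul_self he, he, omul_neg_right,
    smul_add, smul_smul]

end ImaginaryUnit

theorem octonion_kernel_reassoc_general (ei : Octonion)
    (α₁ α₂ α₃ β₁ β₂ β₃ : ℝ) :
    omul (omul (omul (omul ei (octExp ((-α₁) • e1))) (octExp ((-α₂) • e2)))
          (octExp ((-α₃) • e4))) (octExp (β₃ • e4)) =
      omul (omul (omul ei (octExp ((-α₁) • e1))) (octExp ((-α₂) • e2)))
        (omul (octExp ((-α₃) • e4)) (octExp (β₃ • e4))) ∧
    omul (omul (omul ei (octExp ((-α₁) • e1))) (octExp ((-α₂) • e2)))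
        (octExp (β₂ • e2)) =
      omul (omul ei (octExp ((-α₁) • e1)))
        (omul (octExp ((-α₂) • e2)) (octExp (β₂ • e2))) ∧
    omul (omul ei (octExp ((-α₁) • e1))) (octExp (β₁ • e1)) =
      omul ei (omul (octExp ((-α₁) • e1)) (octExp (β₁ • e1))) :=
  ⟨omul_octExp_smul_octExp_smul e4_omul_self _ _ _,
    omul_octExp_smul_octExp_smul e2_omul_self _ _ _,
    omul_octExp_smul_octExp_smul e1_omul_self _ _ _⟩

theorem octonion_kernel_reassoc (ei : Octonion)
    (h : ei ∈ ({e1, e2, e3, e4, e5, e6, e7} : Set Octonion))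
    (α₁ α₂ α₃ β₁ β₂ β₃ : ℝ) :
    omul (omul (omul (omul ei (octExp ((-α₁) • e1))) (octExp ((-α₂) • e2)))
          (octExp ((-α₃) • e4))) (octExp (β₃ • e4)) =
      omul (omul (omul ei (octExp ((-α₁) • e1))) (octExp ((-α₂) • e2)))
        (omul (octExp ((-α₃) • e4)) (octExp (β₃ • e4))) ∧
    omul (omul (omul ei (octExp ((-α₁) • e1))) (octExp ((-α₂) • e2)))
        (octExp (β₂ • e2)) =
      omul (omul ei (octExp ((-α₁) • e1)))
        (omul (octExp ((-α₂) • e2)) (octExp (β₂ • e2))) ∧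
    omul (omul ei (octExp ((-α₁) • e1))) (octExp (β₁ • e1)) =
      omul ei (omul (octExp ((-α₁) • e1)) (octExp (β₁ • e1))) :=
  octonion_kernel_reassoc_general ei α₁ α₂ α₃ β₁ β₂ β₃
end
end

section
/- An element s = (s₀,s₁,s₂,s₃) of the quadruple-complex algebra 𝔽 is ⊙-invertible if and only if δ(s) := ((s₀−s₃)²+(s₁+s₂)²)·((s₀+s₃)²+(s₁−s₂)²) ≠ 0; in that case the inverse is (1/δ)·( s₀(s₀²+s₁²+s₂²−s₃²)+2s₁s₂s₃, −s₁(s₀²+s₁²−s₂²+s₃²)−2s₀s₂s₃, −s₂(s₀²−s₁²+s₂²+s₃²)−2s₀s₁s₃, s₃(−s₀²+s₁²+s₂²+s₃²)+2s₀s₁s₂ ). -/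
noncomputable section

/-- The quadruple-complex algebra 𝔽 = ℂ⁴ (componentwise addition). -/
abbrev Fq : Type := ℂ × ℂ × ℂ × ℂ

/-- The quadruple-complex product ⊙. -/
def qmul (s t : Fq) : Fq :=
  (s.1 * t.1 - s.2.1 * t.2.1 - s.2.2.1 * t.2.2.1 + s.2.2.2 * t.2.2.2,
   s.1 * t.2.1 + s.2.1 * t.1 - s.2.2.1 * t.2.2.2 - s.2.2.2 * t.2.2.1,
   s.1 * t.2.2.1 + s.2.2.1 * t.1 - s.2.1 * t.2.2.2 - s.2.2.2 * t.2.1,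
   s.1 * t.2.2.2 + s.2.2.2 * t.1 + s.2.1 * t.2.2.1 + s.2.2.1 * t.2.1)

/-- The unit (1,0,0,0) of 𝔽. -/
def qone : Fq := (1, 0, 0, 0)

/-- Since `e₃ = (0, 0, 0, 1)` satisfies `e₃ ⊙ e₃ = 1`, `𝔽` splits along the idempotents
`(1 ± e₃)/2` into two copies of `ℂ[X]/(X² + 1)`; the factors of `qdelta s` are the norms of the
two components of `s`, so `qdelta` is multiplicative. -/
def qdelta (s : Fq) : ℂ :=
  ((s.1 - s.2.2.2) ^ 2 + (s.2.1 + s.2.2.1) ^ 2) *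
    ((s.1 + s.2.2.2) ^ 2 + (s.2.1 - s.2.2.1) ^ 2)

def qadj (s : Fq) : Fq :=
  (s.1 * (s.1 ^ 2 + s.2.1 ^ 2 + s.2.2.1 ^ 2 - s.2.2.2 ^ 2) + 2 * s.2.1 * s.2.2.1 * s.2.2.2,
   -s.2.1 * (s.1 ^ 2 + s.2.1 ^ 2 - s.2.2.1 ^ 2 + s.2.2.2 ^ 2) - 2 * s.1 * s.2.2.1 * s.2.2.2,
   -s.2.2.1 * (s.1 ^ 2 - s.2.1 ^ 2 + s.2.2.1 ^ 2 + s.2.2.2 ^ 2) - 2 * s.1 * s.2.1 * s.2.2.2,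
   s.2.2.2 * (-s.1 ^ 2 + s.2.1 ^ 2 + s.2.2.1 ^ 2 + s.2.2.2 ^ 2) + 2 * s.1 * s.2.1 * s.2.2.1)

lemma qdelta_qmul (s t : Fq) : qdelta (qmul s t) = qdelta s * qdelta t := by
  simp only [qdelta, qmul]
  ring

lemma qdelta_qone : qdelta qone = 1 := by
  norm_num [qdelta, qone]

lemma qmul_smul (c : ℂ) (s t : Fq) : qmul s (c • t) = c • qmul s t := by
  simp only [qmul, Prod.smul_fst, Prod.smul_snd, Prod.smul_mk, smul_eq_mul, Prod.mk.injEq]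
  refine ⟨?_, ?_, ?_, ?_⟩ <;> ring

lemma qmul_qadj (s : Fq) : qmul s (qadj s) = qdelta s • qone := by
  simp only [qmul, qadj, qdelta, qone, Prod.smul_mk, smul_eq_mul, Prod.mk.injEq]
  refine ⟨?_, ?_, ?_, ?_⟩ <;> ring

lemma qdelta_ne_zero_of_qmul_eq_qone {s t : Fq} (h : qmul s t = qone) : qdelta s ≠ 0 :=
  left_ne_zero_of_mul_eq_one (by rw [← qdelta_qmul, h, qdelta_qone])

lemma qmul_inv_smul_qadj {s : Fq} (h : qdelta s ≠ 0) :
    qmul s ((qdelta s)⁻¹ • qadj s) = qone := by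
  rw [qmul_smul, qmul_qadj, smul_smul, inv_mul_cancel₀ h, one_smul]

theorem qmul_inverse_iff (s : Fq) :
    ((∃ t : Fq, qmul s t = qone) ↔
      ((s.1 - s.2.2.2) ^ 2 + (s.2.1 + s.2.2.1) ^ 2) *
        ((s.1 + s.2.2.2) ^ 2 + (s.2.1 - s.2.2.1) ^ 2) ≠ 0) ∧
    (((s.1 - s.2.2.2) ^ 2 + (s.2.1 + s.2.2.1) ^ 2) *
        ((s.1 + s.2.2.2) ^ 2 + (s.2.1 - s.2.2.1) ^ 2) ≠ 0 →
      qmul s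
        ((((s.1 - s.2.2.2) ^ 2 + (s.2.1 + s.2.2.1) ^ 2) *
            ((s.1 + s.2.2.2) ^ 2 + (s.2.1 - s.2.2.1) ^ 2))⁻¹ •
          ((s.1 * (s.1 ^ 2 + s.2.1 ^ 2 + s.2.2.1 ^ 2 - s.2.2.2 ^ 2) +
              2 * s.2.1 * s.2.2.1 * s.2.2.2,
            -s.2.1 * (s.1 ^ 2 + s.2.1 ^ 2 - s.2.2.1 ^ 2 + s.2.2.2 ^ 2) -
              2 * s.1 * s.2.2.1 * s.2.2.2,
            -s.2.2.1 * (s.1 ^ 2 - s.2.1 ^ 2 + s.2.2.1 ^ 2 + s.2.2.2 ^ 2) -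
              2 * s.1 * s.2.1 * s.2.2.2,
            s.2.2.2 * (-s.1 ^ 2 + s.2.1 ^ 2 + s.2.2.1 ^ 2 + s.2.2.2 ^ 2) +
              2 * s.1 * s.2.1 * s.2.2.1) : Fq)) = qone) := by
  refine ⟨⟨fun ⟨_, ht⟩ => qdelta_ne_zero_of_qmul_eq_qone ht, fun h => ⟨_, qmul_inv_smul_qadj h⟩⟩,
    qmul_inv_smul_qadj⟩
end
end

section
/- Argument-scaling theorem for the OFT: if u : ℝ³ → 𝕆 is integrable, a, b, c are nonzero reals, and v(x₁,x₂,x₃) = u(x₁/a, x₂/b, x₃/c), then the OFT of v at (f₁,f₂,f₃) equals |abc|·U(af₁, bf₂, cf₃), where U is the OFT of u. -/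
noncomputable section
open MeasureTheory Real

/-!
Substituting `x = (a y₁, b y₂, c y₃)` multiplies Lebesgue measure on `ℝ³` by `|abc|`; under this
substitution `u (x₁/a, x₂/b, x₃/c)` becomes `u y`, and each exponent `2π fᵢ xᵢ` becomes
`2π (aᵢ fᵢ) yᵢ`, which is the kernel of the OFT at the scaled frequency. No property of octonion
multiplication is needed.
-/

namespace MeasureTheory.Measure

lemma map_prodMap_eq_smul {α β : Type*} [MeasurableSpace α] [MeasurableSpace β]
    {μ : Measure α} {ν : Measure β} [SFinite μ] [SFinite ν] {f : α → α} {g : β → β}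
    (hf : Measurable f) (hg : Measurable g) {c d : ENNReal}
    (hμ : map f μ = c • μ) (hν : map g ν = d • ν) :
    map (Prod.map f g) (μ.prod ν) = (c * d) • μ.prod ν := by
  rw [← map_prod_map μ ν hf hg, hμ, hν, prod_smul_left, prod_smul_right, smul_smul]

end MeasureTheory.Measure

lemma Real.map_volume_mul_left₃ {a b c : ℝ} (ha : a ≠ 0) (hb : b ≠ 0) (hc : c ≠ 0) :
    Measure.map (fun y : ℝ × ℝ × ℝ => (a * y.1, b * y.2.1, c * y.2.2)) volume
      = ENNReal.ofReal |(a * b * c)⁻¹| • volume := by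
  have hbc := Measure.map_prodMap_eq_smul (measurable_const_mul b) (measurable_const_mul c)
    (Real.map_volume_mul_left hb) (Real.map_volume_mul_left hc)
  rw [← Measure.volume_eq_prod] at hbc
  rw [Measure.volume_eq_prod]
  refine (Measure.map_prodMap_eq_smul (measurable_const_mul a)
    ((measurable_const_mul b).prodMap (measurable_const_mul c))
    (Real.map_volume_mul_left ha) hbc).trans ?_
  rw [← ENNReal.ofReal_mul (abs_nonneg _), ← ENNReal.ofReal_mul (abs_nonneg _), ← abs_mul,
    ← abs_mul, mul_inv, mul_inv, mul_assoc]

lemma Real.integral_comp_mul_left₃ {F : Type*} [NormedAddCommGroup F] [NormedSpace ℝ F]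
    (g : ℝ × ℝ × ℝ → F) {a b c : ℝ} (ha : a ≠ 0) (hb : b ≠ 0) (hc : c ≠ 0) :
    ∫ y : ℝ × ℝ × ℝ, g (a * y.1, b * y.2.1, c * y.2.2) = |(a * b * c)⁻¹| • ∫ x, g x := by
  let e : (ℝ × ℝ × ℝ) ≃ᵐ (ℝ × ℝ × ℝ) :=
    (MeasurableEquiv.mulLeft₀ a ha).prodCongr
      ((MeasurableEquiv.mulLeft₀ b hb).prodCongr (MeasurableEquiv.mulLeft₀ c hc))
  have he : ⇑e = fun y : ℝ × ℝ × ℝ => (a * y.1, b * y.2.1, c * y.2.2) := rfl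
  have h := integral_map_equiv (μ := volume) e g
  rw [he, Real.map_volume_mul_left₃ ha hb hc, integral_smul_measure,
    ENNReal.toReal_ofReal (abs_nonneg _)] at h
  exact h.symm

theorem OFT_scaling_general (u : ℝ × ℝ × ℝ → Octonion)
    (a b c : ℝ) (ha : a ≠ 0) (hb : b ≠ 0) (hc : c ≠ 0) (f : ℝ × ℝ × ℝ) :
    OFT (fun x => u (x.1 / a, x.2.1 / b, x.2.2 / c)) f =
      |a * b * c| • OFT u (a * f.1, b * f.2.1, c * f.2.2) := by
  have habc : |a * b * c| ≠ 0 := abs_ne_zero.2 (mul_ne_zero (mul_ne_zero ha hb) hc)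
  rw [OFT, OFT, ← inv_smul_eq_iff₀ habc, ← abs_inv, ← Real.integral_comp_mul_left₃ _ ha hb hc]
  simp only [mul_div_cancel_left₀ _ ha, mul_div_cancel_left₀ _ hb, mul_div_cancel_left₀ _ hc]
  ring_nf

theorem OFT_scaling (u : ℝ × ℝ × ℝ → Octonion) (hu : Integrable u)
    (a b c : ℝ) (ha : a ≠ 0) (hb : b ≠ 0) (hc : c ≠ 0) (f : ℝ × ℝ × ℝ) :
    OFT (fun x => u (x.1 / a, x.2.1 / b, x.2.2 / c)) f =
      |a * b * c| • OFT u (a * f.1, b * f.2.1, c * f.2.2) :=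
  OFT_scaling_general u a b c ha hb hc f
end
end
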